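/- If k₂ = 1, then almost surely every strongly stable permutation is super-stable and conversely, so that S_{n,s} = S_{n,sup} almost surely; in particular E[S_{n,s}] = E[S_{n,sup}]. -/
import Mathlib


open MeasureTheory Set

noncomputable section

/-- Strict vector order: every coordinate strictly smaller. -/
def vlt {k : ℕ} (u v : Fin k → ℝ) : Prop := ∀ t, u t < v t

/-- Sample space: the `2n²` preference vectors `X_i^{(j)} = ω.1 i j ∈ [0,1]^{k₁}` and
`Y_j^{(i)} = ω.2 j i ∈ [0,1]^{k₂}`. -/
abbrev PrefSpace (n k₁ k₂ : ℕ) :=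
  (Fin n → Fin n → Fin k₁ → ℝ) × (Fin n → Fin n → Fin k₂ → ℝ)

/-- Uniform probability measure on the cube `[0,1]^k`. -/
def cubeMeasure (k : ℕ) : Measure (Fin k → ℝ) :=
  Measure.pi fun _ => volume.restrict (Icc (0:ℝ) 1)

/-- The distribution of the whole family: all `2n²` vectors independent,
uniform on their respective cubes. -/
def prefMeasure (n k₁ k₂ : ℕ) : Measure (PrefSpace n k₁ k₂) :=
  (Measure.pi fun _ : Fin n => Measure.pi fun _ : Fin n => cubeMeasure k₁).prod
    (Measure.pi fun _ : Fin n => Measure.pi fun _ : Fin n => cubeMeasure k₂)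

/-- The pair `(i,j)` w-blocks `σ`. -/
def wBlocks {n k₁ k₂ : ℕ} (ω : PrefSpace n k₁ k₂) (σ : Equiv.Perm (Fin n))
    (i j : Fin n) : Prop :=
  vlt (ω.1 i j) (ω.1 i (σ i)) ∧ vlt (ω.2 j i) (ω.2 j (σ⁻¹ j))

/-- The pair `(i,j)` s-blocks `σ`. -/
def sBlocks {n k₁ k₂ : ℕ} (ω : PrefSpace n k₁ k₂) (σ : Equiv.Perm (Fin n))
    (i j : Fin n) : Prop :=
  (vlt (ω.1 i j) (ω.1 i (σ i)) ∧ ¬ vlt (ω.2 j (σ⁻¹ j)) (ω.2 j i)) ∨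
  (¬ vlt (ω.1 i (σ i)) (ω.1 i j) ∧ vlt (ω.2 j i) (ω.2 j (σ⁻¹ j)))

/-- The pair `(i,j)` sup-blocks `σ`. -/
def supBlocks {n k₁ k₂ : ℕ} (ω : PrefSpace n k₁ k₂) (σ : Equiv.Perm (Fin n))
    (i j : Fin n) : Prop :=
  ¬ vlt (ω.1 i (σ i)) (ω.1 i j) ∧ ¬ vlt (ω.2 j (σ⁻¹ j)) (ω.2 j i)

/-- `σ` is weakly stable. -/
def weaklyStable {n k₁ k₂ : ℕ} (ω : PrefSpace n k₁ k₂) (σ : Equiv.Perm (Fin n)) : Prop :=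
  ∀ i j, j ≠ σ i → ¬ wBlocks ω σ i j

/-- `σ` is strongly stable. -/
def stronglyStable {n k₁ k₂ : ℕ} (ω : PrefSpace n k₁ k₂) (σ : Equiv.Perm (Fin n)) : Prop :=
  ∀ i j, j ≠ σ i → ¬ sBlocks ω σ i j

/-- `σ` is super-stable. -/
def superStable {n k₁ k₂ : ℕ} (ω : PrefSpace n k₁ k₂) (σ : Equiv.Perm (Fin n)) : Prop :=
  ∀ i j, j ≠ σ i → ¬ supBlocks ω σ i j

/-- Number of weakly stable permutations. -/
def Sw (n k₁ k₂ : ℕ) (ω : PrefSpace n k₁ k₂) : ℕ :=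
  Nat.card {σ : Equiv.Perm (Fin n) // weaklyStable ω σ}

/-- Number of strongly stable permutations. -/
def Ss (n k₁ k₂ : ℕ) (ω : PrefSpace n k₁ k₂) : ℕ :=
  Nat.card {σ : Equiv.Perm (Fin n) // stronglyStable ω σ}

/-- Number of super-stable permutations. -/
def Ssup (n k₁ k₂ : ℕ) (ω : PrefSpace n k₁ k₂) : ℕ :=
  Nat.card {σ : Equiv.Perm (Fin n) // superStable ω σ}

/-- Expected number of weakly stable permutations. -/
def ESw (n k₁ k₂ : ℕ) : ℝ := ∫ ω, (Sw n k₁ k₂ ω : ℝ) ∂ prefMeasure n k₁ k₂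

/-- Expected number of strongly stable permutations. -/
def ESs (n k₁ k₂ : ℕ) : ℝ := ∫ ω, (Ss n k₁ k₂ ω : ℝ) ∂ prefMeasure n k₁ k₂

/-- Expected number of super-stable permutations. -/
def ESsup (n k₁ k₂ : ℕ) : ℝ := ∫ ω, (Ssup n k₁ k₂ ω : ℝ) ∂ prefMeasure n k₁ k₂

instance : IsProbabilityMeasure (volume.restrict (Icc (0:ℝ) 1)) :=
  ⟨by simp [Real.volume_Icc]⟩

instance (k : ℕ) : IsProbabilityMeasure (cubeMeasure k) := by
  rw [cubeMeasure]; infer_instance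

/-- The diagonal of two distinct coordinates is null. -/
lemma diag_null (n : ℕ) (i i' : Fin n) (h : i ≠ i') :
    (Measure.pi fun _ : Fin n => cubeMeasure 1) {z : Fin n → Fin 1 → ℝ | z i 0 = z i' 0}
      = 0 := by
  classical
  have h' : ¬ (i' = i) := fun he => h he.symm
  have mp := measurePreserving_piEquivPiSubtypeProd
    (fun _ : Fin n => cubeMeasure 1) (fun j => j = i)
  set T : Set (({j : Fin n // j = i} → Fin 1 → ℝ) × ({j : Fin n // ¬ j = i} → Fin 1 → ℝ)) :=
    {uv | uv.1 ⟨i, rfl⟩ 0 = uv.2 ⟨i', h'⟩ 0} with hT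
  have hpre : (MeasurableEquiv.piEquivPiSubtypeProd (fun _ : Fin n => Fin 1 → ℝ)
      (fun j => j = i)) ⁻¹' T = {z : Fin n → Fin 1 → ℝ | z i 0 = z i' 0} := rfl
  have hmeasT : MeasurableSet T := by
    apply measurableSet_eq_fun
    · exact (measurable_pi_apply _).comp ((measurable_pi_apply _).comp measurable_fst)
    · exact (measurable_pi_apply _).comp ((measurable_pi_apply _).comp measurable_snd)
  have hT0 : ((Measure.pi fun _ : {j : Fin n // j = i} => cubeMeasure 1).prod
      (Measure.pi fun _ : {j : Fin n // ¬ j = i} => cubeMeasure 1)) T = 0 := by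
    rw [Measure.measure_prod_null hmeasT]
    filter_upwards with u
    have hset : (Prod.mk u ⁻¹' T) =
        (Function.eval (⟨i', h'⟩ : {j : Fin n // ¬ j = i})) ⁻¹'
          {w : Fin 1 → ℝ | w 0 = u ⟨i, rfl⟩ 0} := by
      ext v; simp [hT, Function.eval, eq_comm]
    rw [hset]
    refine Measure.pi_eval_preimage_null _ ?_
    rw [cubeMeasure]
    exact Measure.pi_hyperplane _ 0 _
  calc (Measure.pi fun _ : Fin n => cubeMeasure 1)
        {z : Fin n → Fin 1 → ℝ | z i 0 = z i' 0}
      = ((Measure.pi fun _ : {j : Fin n // j = i} => cubeMeasure 1).prod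
        (Measure.pi fun _ : {j : Fin n // ¬ j = i} => cubeMeasure 1)) T := by
        rw [← hpre]
        have h2 := mp.measure_preimage_equiv T
        convert h2 using 3 <;> congr!
    _ = 0 := hT0

/-- Almost surely there are no ties among the `Y` values. -/
lemma ae_noties (n k₁ : ℕ) :
    ∀ᵐ ω ∂ prefMeasure n k₁ 1,
      ∀ j i i' : Fin n, i ≠ i' → ω.2 j i 0 ≠ ω.2 j i' 0 := by
  rw [ae_all_iff]; intro j
  rw [ae_all_iff]; intro i
  rw [ae_all_iff]; intro i'
  by_cases h : i = i'
  · filter_upwards with ω hii'; exact absurd h hii'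
  · have hnull : prefMeasure n k₁ 1 {ω : PrefSpace n k₁ 1 | ω.2 j i 0 = ω.2 j i' 0} = 0 := by
      have hEq : {ω : PrefSpace n k₁ 1 | ω.2 j i 0 = ω.2 j i' 0} =
          (univ : Set (Fin n → Fin n → Fin k₁ → ℝ)) ×ˢ
            {y : Fin n → Fin n → Fin 1 → ℝ | y j i 0 = y j i' 0} := by
        ext ω; simp [Set.mem_prod]
      have hN : (Measure.pi fun _ : Fin n => Measure.pi fun _ : Fin n => cubeMeasure 1)
          {y : Fin n → Fin n → Fin 1 → ℝ | y j i 0 = y j i' 0} = 0 := by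
        have : {y : Fin n → Fin n → Fin 1 → ℝ | y j i 0 = y j i' 0} =
            (Function.eval j) ⁻¹' {z : Fin n → Fin 1 → ℝ | z i 0 = z i' 0} := rfl
        rw [this]
        exact Measure.pi_eval_preimage_null _ (diag_null n i i' h)
      rw [prefMeasure, hEq, Measure.prod_prod, hN, mul_zero]
    have hP : ∀ᵐ ω ∂ prefMeasure n k₁ 1, ω.2 j i 0 ≠ ω.2 j i' 0 := by
      rw [ae_iff]
      simpa using hnull
    filter_upwards [hP] with ω hω _
    exact hω

/-- Pointwise: with no ties among `Y` values, strong stability equals super-stability. -/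
lemma stable_iff_of_noties {n k₁ : ℕ} (hk₁ : 1 ≤ k₁) (ω : PrefSpace n k₁ 1)
    (h : ∀ j i i' : Fin n, i ≠ i' → ω.2 j i 0 ≠ ω.2 j i' 0) (σ : Equiv.Perm (Fin n)) :
    stronglyStable ω σ ↔ superStable ω σ := by
  have key : ∀ i j, j ≠ σ i → (sBlocks ω σ i j ↔ supBlocks ω σ i j) := by
    intro i j hj
    have hne : σ⁻¹ j ≠ i := by
      intro he
      apply hj
      rw [← he]
      simp
    have hY : ¬ vlt (ω.2 j (σ⁻¹ j)) (ω.2 j i) ↔ vlt (ω.2 j i) (ω.2 j (σ⁻¹ j)) := by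
      have hne' := h j (σ⁻¹ j) i hne
      constructor
      · intro hnb t
        have ht : t = 0 := Subsingleton.elim t 0
        subst ht
        rcases lt_trichotomy (ω.2 j i 0) (ω.2 j (σ⁻¹ j) 0) with hl | he | hg
        · exact hl
        · exact absurd he.symm hne'
        · exact absurd (fun t => by
            have ht : t = 0 := Subsingleton.elim t 0
            subst ht; exact hg) hnb
      · intro hb hnb
        exact absurd ((hb 0).trans (hnb 0)) (lt_irrefl _)
    have hX : vlt (ω.1 i j) (ω.1 i (σ i)) → ¬ vlt (ω.1 i (σ i)) (ω.1 i j) := by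
      intro h1 h2
      exact absurd ((h1 ⟨0, hk₁⟩).trans (h2 ⟨0, hk₁⟩)) (lt_irrefl _)
    unfold sBlocks supBlocks
    constructor
    · rintro (⟨hA, hB'⟩ | ⟨hA', hB⟩)
      · exact ⟨hX hA, hB'⟩
      · exact ⟨hA', fun hB' => absurd ((hB 0).trans (hB' 0)) (lt_irrefl _)⟩
    · rintro ⟨hA', hB'⟩
      exact Or.inr ⟨hA', hY.mp hB'⟩
  constructor
  · intro hs i j hj hb; exact hs i j hj ((key i j hj).mpr hb)
  · intro hs i j hj hb; exact hs i j hj ((key i j hj).mp hb)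

/-- If `k₂ = 1`, then almost surely strong stability and super-stability
coincide, so `S_{n,s} = S_{n,sup}` almost surely; in particular
`E[S_{n,s}] = E[S_{n,sup}]`. -/
theorem strongly_stable_eq_super_stable_of_k2_eq_one (n k₁ : ℕ) (hn : 2 ≤ n)
    (hk₁ : 1 ≤ k₁) :
    (∀ᵐ ω ∂ prefMeasure n k₁ 1,
        ∀ σ : Equiv.Perm (Fin n), (stronglyStable ω σ ↔ superStable ω σ)) ∧
    (∀ᵐ ω ∂ prefMeasure n k₁ 1, Ss n k₁ 1 ω = Ssup n k₁ 1 ω) ∧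
    ESs n k₁ 1 = ESsup n k₁ 1 := by
  have E1 : ∀ᵐ ω ∂ prefMeasure n k₁ 1,
      ∀ σ : Equiv.Perm (Fin n), (stronglyStable ω σ ↔ superStable ω σ) :=
    (ae_noties n k₁).mono fun ω hω σ => stable_iff_of_noties hk₁ ω hω σ
  have E2 : ∀ᵐ ω ∂ prefMeasure n k₁ 1, Ss n k₁ 1 ω = Ssup n k₁ 1 ω :=
    E1.mono fun ω hω => by
      unfold Ss Ssup
      exact Nat.card_congr (Equiv.subtypeEquivRight hω)
  refine ⟨E1, E2, ?_⟩
  unfold ESs ESsup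
  exact integral_congr_ae (E2.mono fun ω hω => by simp only [hω])
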